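/- Let m ≥ 2, 0 ≤ s ≤ m, let c ≠ 0 be a real number, let I, J ⊆ ℝ be open intervals, and let L : I × J → ℝ^m be a smooth map satisfying ⟨∂L/∂x, ∂L/∂x⟩_s = 0, ⟨∂L/∂y, ∂L/∂y⟩_s = 0, and ⟨∂L/∂x, ∂L/∂y⟩_s = c at every point of I × J (so the induced Lorentzian metric is flat). Suppose that at every point p the vector ∂²L/∂x∂y(p) lies in the span of ∂L/∂x(p) and ∂L/∂y(p) (minimality). Then there exist smooth curves z : I → ℝ^m and w : J → ℝ^m with ⟨z'(x), z'(x)⟩_s = 0, ⟨w'(y), w'(y)⟩_s = 0, and ⟨z'(x), w'(y)⟩_s = c for all (x,y) ∈ I × J, such that L(x,y) = z(x) + w(y). (This is Corollary 4.1: a flat Lorentz surface in 𝔼^m_s is minimal if and only if it is locally a sum of null curves with constant nonzero pairing.) -/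

import Mathlib

noncomputable def pform (s n : ℕ) (u v : Fin n → ℝ) : ℝ :=
  ∑ i : Fin n, (if (i : ℕ) < s then -(u i * v i) else u i * v i)

noncomputable def pd1 {E : Type*} [NormedAddCommGroup E] [NormedSpace ℝ E]
    (L : ℝ → ℝ → E) (x y : ℝ) : E :=
  deriv (fun t => L t y) x

noncomputable def pd2 {E : Type*} [NormedAddCommGroup E] [NormedSpace ℝ E]
    (L : ℝ → ℝ → E) (x y : ℝ) : E :=
  deriv (fun t => L x t) y

section helpers

lemma pform_comm (s n : ℕ) (u v : Fin n → ℝ) : pform s n u v = pform s n v u := by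
  unfold pform; congr 1; ext i; split <;> ring

lemma pform_combo_left (s n : ℕ) (a b : ℝ) (u v w : Fin n → ℝ) :
    pform s n (a • u + b • v) w = a * pform s n u w + b * pform s n v w := by
  unfold pform
  rw [Finset.mul_sum, Finset.mul_sum, ← Finset.sum_add_distrib]
  congr 1; ext i
  simp only [Pi.add_apply, Pi.smul_apply, smul_eq_mul]
  split <;> ring

lemma pform_zero_left (s n : ℕ) (v : Fin n → ℝ) : pform s n 0 v = 0 := by
  unfold pform; apply Finset.sum_eq_zero; intro i _; simp

lemma hasDerivAt_pform {s n : ℕ} {u v : ℝ → Fin n → ℝ} {u' v' : Fin n → ℝ} {t : ℝ}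
    (hu : HasDerivAt u u' t) (hv : HasDerivAt v v' t) :
    HasDerivAt (fun r => pform s n (u r) (v r))
      (pform s n u' (v t) + pform s n (u t) v') t := by
  have hui : ∀ i : Fin n, HasDerivAt (fun r => u r i) (u' i) t := fun i =>
    (hasDerivAt_pi.1 hu) i
  have hvi : ∀ i : Fin n, HasDerivAt (fun r => v r i) (v' i) t := fun i =>
    (hasDerivAt_pi.1 hv) i
  have key : ∀ i : Fin n, HasDerivAt
      (fun r => if (i : ℕ) < s then -(u r i * v r i) else u r i * v r i)
      (if (i : ℕ) < s then -(u' i * v t i + u t i * v' i)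
        else u' i * v t i + u t i * v' i) t := by
    intro i
    by_cases h : (i : ℕ) < s
    · simpa [h] using ((hui i).fun_mul (hvi i)).fun_neg
    · simpa [h] using (hui i).fun_mul (hvi i)
  have hsum : HasDerivAt (fun r => pform s n (u r) (v r))
      (∑ i : Fin n, (if (i : ℕ) < s then -(u' i * v t i + u t i * v' i)
        else u' i * v t i + u t i * v' i)) t := by
    simpa [pform] using HasDerivAt.fun_sum (fun i (_ : i ∈ Finset.univ) => key i)
  convert hsum using 1
  unfold pform
  rw [← Finset.sum_add_distrib]
  congr 1; ext i; split <;> ring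

lemma const_of_hasDerivAt_zero {E : Type*} [NormedAddCommGroup E] [NormedSpace ℝ E]
    {S : Set ℝ} (hconv : Convex ℝ S) (hSo : IsOpen S) {f : ℝ → E}
    (hf : ∀ t ∈ S, HasDerivAt f 0 t) {a b : ℝ} (ha : a ∈ S) (hb : b ∈ S) : f a = f b := by
  apply hconv.is_const_of_fderivWithin_eq_zero (𝕜 := ℝ)
  · intro t ht; exact ((hf t ht).differentiableAt).differentiableWithinAt
  · intro t ht
    rw [fderivWithin_of_isOpen hSo ht]
    have h0 : HasFDerivAt f ((1 : ℝ →L[ℝ] ℝ).smulRight (0 : E)) t := (hf t ht).hasFDerivAt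
    rw [h0.fderiv]
    ext; simp
  · exact ha
  · exact hb

section calc1

variable {E : Type*} [NormedAddCommGroup E] [NormedSpace ℝ E]
variable {I J : Set ℝ} {L : ℝ → ℝ → E}

lemma line1_hasDerivAt (x y : ℝ) : HasDerivAt (fun t : ℝ => (t, y)) ((1 : ℝ), (0 : ℝ)) x :=
  (hasDerivAt_id x).prodMk (hasDerivAt_const x y)

lemma line2_hasDerivAt (x y : ℝ) : HasDerivAt (fun t : ℝ => (x, t)) ((0 : ℝ), (1 : ℝ)) y :=
  (hasDerivAt_const y x).prodMk (hasDerivAt_id y)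

lemma pd1_hasDerivAt (hIo : IsOpen I) (hJo : IsOpen J)
    (hL : ContDiffOn ℝ (⊤ : ℕ∞) (fun p : ℝ × ℝ => L p.1 p.2) (I ×ˢ J))
    {x y : ℝ} (hx : x ∈ I) (hy : y ∈ J) :
    HasDerivAt (fun t => L t y)
      (fderiv ℝ (fun p : ℝ × ℝ => L p.1 p.2) (x, y) (1, 0)) x := by
  have hFd : DifferentiableAt ℝ (fun p : ℝ × ℝ => L p.1 p.2) (x, y) :=
    (hL.contDiffAt ((hIo.prod hJo).mem_nhds ⟨hx, hy⟩)).differentiableAt (by simp)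
  exact hFd.hasFDerivAt.comp_hasDerivAt x (line1_hasDerivAt x y)

lemma pd2_hasDerivAt (hIo : IsOpen I) (hJo : IsOpen J)
    (hL : ContDiffOn ℝ (⊤ : ℕ∞) (fun p : ℝ × ℝ => L p.1 p.2) (I ×ˢ J))
    {x y : ℝ} (hx : x ∈ I) (hy : y ∈ J) :
    HasDerivAt (fun t => L x t)
      (fderiv ℝ (fun p : ℝ × ℝ => L p.1 p.2) (x, y) (0, 1)) y := by
  have hFd : DifferentiableAt ℝ (fun p : ℝ × ℝ => L p.1 p.2) (x, y) :=
    (hL.contDiffAt ((hIo.prod hJo).mem_nhds ⟨hx, hy⟩)).differentiableAt (by simp)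
  exact hFd.hasFDerivAt.comp_hasDerivAt y (line2_hasDerivAt x y)

lemma pd1_eq (hIo : IsOpen I) (hJo : IsOpen J)
    (hL : ContDiffOn ℝ (⊤ : ℕ∞) (fun p : ℝ × ℝ => L p.1 p.2) (I ×ˢ J))
    {x y : ℝ} (hx : x ∈ I) (hy : y ∈ J) :
    pd1 L x y = fderiv ℝ (fun p : ℝ × ℝ => L p.1 p.2) (x, y) (1, 0) :=
  (pd1_hasDerivAt hIo hJo hL hx hy).deriv

lemma pd2_eq (hIo : IsOpen I) (hJo : IsOpen J)
    (hL : ContDiffOn ℝ (⊤ : ℕ∞) (fun p : ℝ × ℝ => L p.1 p.2) (I ×ˢ J))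
    {x y : ℝ} (hx : x ∈ I) (hy : y ∈ J) :
    pd2 L x y = fderiv ℝ (fun p : ℝ × ℝ => L p.1 p.2) (x, y) (0, 1) :=
  (pd2_hasDerivAt hIo hJo hL hx hy).deriv

lemma pd2_hasDerivAt' (hIo : IsOpen I) (hJo : IsOpen J)
    (hL : ContDiffOn ℝ (⊤ : ℕ∞) (fun p : ℝ × ℝ => L p.1 p.2) (I ×ˢ J))
    {x y : ℝ} (hx : x ∈ I) (hy : y ∈ J) :
    HasDerivAt (fun t => L x t) (pd2 L x y) y := by
  rw [pd2_eq hIo hJo hL hx hy]; exact pd2_hasDerivAt hIo hJo hL hx hy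

lemma pd12_hasDerivAt [CompleteSpace E] (hIo : IsOpen I) (hJo : IsOpen J)
    (hL : ContDiffOn ℝ (⊤ : ℕ∞) (fun p : ℝ × ℝ => L p.1 p.2) (I ×ˢ J))
    {x y : ℝ} (hx : x ∈ I) (hy : y ∈ J) :
    HasDerivAt (fun t => pd2 L t y)
      ((fderiv ℝ (fderiv ℝ (fun p : ℝ × ℝ => L p.1 p.2)) (x, y) (1, 0)) (0, 1)) x := by
  set F := fun p : ℝ × ℝ => L p.1 p.2 with hF
  have hG : ContDiffOn ℝ (⊤ : ℕ∞) (fderiv ℝ F) (I ×ˢ J) :=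
    hL.fderiv_of_isOpen (hIo.prod hJo) (by simp)
  have hGd : DifferentiableAt ℝ (fderiv ℝ F) (x, y) :=
    (hG.contDiffAt ((hIo.prod hJo).mem_nhds ⟨hx, hy⟩)).differentiableAt (by simp)
  have step : HasDerivAt (fun t => fderiv ℝ F (t, y) (0, 1))
      ((fderiv ℝ (fderiv ℝ F) (x, y) (1, 0)) (0, 1)) x := by
    have h1 : HasFDerivAt (fun A : ℝ × ℝ →L[ℝ] E => A ((0 : ℝ), (1 : ℝ)))
        (ContinuousLinearMap.apply ℝ E ((0 : ℝ), (1 : ℝ))) (fderiv ℝ F (x, y)) :=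
      (ContinuousLinearMap.apply ℝ E ((0 : ℝ), (1 : ℝ))).hasFDerivAt
    exact (h1.comp (x, y) hGd.hasFDerivAt).comp_hasDerivAt x (line1_hasDerivAt x y)
  refine step.congr_of_eventuallyEq ?_
  filter_upwards [hIo.mem_nhds hx] with t ht
  exact pd2_eq hIo hJo hL ht hy

lemma pd12_hasDerivAt' [CompleteSpace E] (hIo : IsOpen I) (hJo : IsOpen J)
    (hL : ContDiffOn ℝ (⊤ : ℕ∞) (fun p : ℝ × ℝ => L p.1 p.2) (I ×ˢ J))
    {x y : ℝ} (hx : x ∈ I) (hy : y ∈ J) :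
    HasDerivAt (fun t => pd2 L t y) (pd1 (pd2 L) x y) x := by
  have h := pd12_hasDerivAt hIo hJo hL hx hy
  have : pd1 (pd2 L) x y
      = (fderiv ℝ (fderiv ℝ (fun p : ℝ × ℝ => L p.1 p.2)) (x, y) (1, 0)) (0, 1) := h.deriv
  rw [this]; exact h

lemma pd21_hasDerivAt [CompleteSpace E] (hIo : IsOpen I) (hJo : IsOpen J)
    (hL : ContDiffOn ℝ (⊤ : ℕ∞) (fun p : ℝ × ℝ => L p.1 p.2) (I ×ˢ J))
    {x y : ℝ} (hx : x ∈ I) (hy : y ∈ J) :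
    HasDerivAt (fun t => pd1 L x t)
      ((fderiv ℝ (fderiv ℝ (fun p : ℝ × ℝ => L p.1 p.2)) (x, y) (0, 1)) (1, 0)) y := by
  set F := fun p : ℝ × ℝ => L p.1 p.2 with hF
  have hG : ContDiffOn ℝ (⊤ : ℕ∞) (fderiv ℝ F) (I ×ˢ J) :=
    hL.fderiv_of_isOpen (hIo.prod hJo) (by simp)
  have hGd : DifferentiableAt ℝ (fderiv ℝ F) (x, y) :=
    (hG.contDiffAt ((hIo.prod hJo).mem_nhds ⟨hx, hy⟩)).differentiableAt (by simp)
  have step : HasDerivAt (fun t => fderiv ℝ F (x, t) (1, 0))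
      ((fderiv ℝ (fderiv ℝ F) (x, y) (0, 1)) (1, 0)) y := by
    have h1 : HasFDerivAt (fun A : ℝ × ℝ →L[ℝ] E => A ((1 : ℝ), (0 : ℝ)))
        (ContinuousLinearMap.apply ℝ E ((1 : ℝ), (0 : ℝ))) (fderiv ℝ F (x, y)) :=
      (ContinuousLinearMap.apply ℝ E ((1 : ℝ), (0 : ℝ))).hasFDerivAt
    exact (h1.comp (x, y) hGd.hasFDerivAt).comp_hasDerivAt y (line2_hasDerivAt x y)
  refine step.congr_of_eventuallyEq ?_
  filter_upwards [hJo.mem_nhds hy] with t ht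
  exact pd1_eq hIo hJo hL hx ht

lemma schwarz [CompleteSpace E] (hIo : IsOpen I) (hJo : IsOpen J)
    (hL : ContDiffOn ℝ (⊤ : ℕ∞) (fun p : ℝ × ℝ => L p.1 p.2) (I ×ˢ J))
    {x y : ℝ} (hx : x ∈ I) (hy : y ∈ J) :
    pd1 (pd2 L) x y = pd2 (pd1 L) x y := by
  have hmem := (hIo.prod hJo).mem_nhds (Set.mk_mem_prod hx hy)
  have hsym := (hL.contDiffAt hmem).isSymmSndFDerivAt (by rw [minSmoothness_of_isRCLikeNormedField]; exact WithTop.coe_le_coe.2 le_top)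
  have e1 : pd1 (pd2 L) x y
      = (fderiv ℝ (fderiv ℝ (fun p : ℝ × ℝ => L p.1 p.2)) (x, y) (1, 0)) (0, 1) :=
    (pd12_hasDerivAt hIo hJo hL hx hy).deriv
  have e2 : pd2 (pd1 L) x y
      = (fderiv ℝ (fderiv ℝ (fun p : ℝ × ℝ => L p.1 p.2)) (x, y) (0, 1)) (1, 0) :=
    (pd21_hasDerivAt hIo hJo hL hx hy).deriv
  rw [e1, e2, hsym]

lemma pd21_hasDerivAt' [CompleteSpace E] (hIo : IsOpen I) (hJo : IsOpen J)
    (hL : ContDiffOn ℝ (⊤ : ℕ∞) (fun p : ℝ × ℝ => L p.1 p.2) (I ×ˢ J))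
    {x y : ℝ} (hx : x ∈ I) (hy : y ∈ J) :
    HasDerivAt (fun t => pd1 L x t) (pd1 (pd2 L) x y) y := by
  have h := pd21_hasDerivAt hIo hJo hL hx hy
  have e : pd1 (pd2 L) x y
      = (fderiv ℝ (fderiv ℝ (fun p : ℝ × ℝ => L p.1 p.2)) (x, y) (0, 1)) (1, 0) := by
    rw [schwarz hIo hJo hL hx hy]; exact h.deriv
  rw [e]; exact h

end calc1

end helpers

theorem stmt_4 (m s : ℕ) (hm : 2 ≤ m) (hs : s ≤ m) (c : ℝ) (hc : c ≠ 0) (I J : Set ℝ)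
    (hIo : IsOpen I) (hIc : I.OrdConnected) (hJo : IsOpen J) (hJc : J.OrdConnected)
    (L : ℝ → ℝ → Fin m → ℝ)
    (hL : ContDiffOn ℝ (⊤ : ℕ∞) (fun p : ℝ × ℝ => L p.1 p.2) (I ×ˢ J))
    (h1 : ∀ x ∈ I, ∀ y ∈ J, pform s m (pd1 L x y) (pd1 L x y) = 0)
    (h2 : ∀ x ∈ I, ∀ y ∈ J, pform s m (pd2 L x y) (pd2 L x y) = 0)
    (h3 : ∀ x ∈ I, ∀ y ∈ J, pform s m (pd1 L x y) (pd2 L x y) = c)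
    (hmin : ∀ x ∈ I, ∀ y ∈ J,
      pd1 (pd2 L) x y ∈ Submodule.span ℝ ({pd1 L x y, pd2 L x y} : Set (Fin m → ℝ))) :
    ∃ z w : ℝ → Fin m → ℝ, ContDiffOn ℝ (⊤ : ℕ∞) z I ∧ ContDiffOn ℝ (⊤ : ℕ∞) w J ∧
      (∀ x ∈ I, pform s m (deriv z x) (deriv z x) = 0) ∧
      (∀ y ∈ J, pform s m (deriv w y) (deriv w y) = 0) ∧
      (∀ x ∈ I, ∀ y ∈ J, pform s m (deriv z x) (deriv w y) = c) ∧
      (∀ x ∈ I, ∀ y ∈ J, L x y = z x + w y) := by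
  rcases Set.eq_empty_or_nonempty I with hIe | ⟨x₀, hx₀⟩
  · refine ⟨0, 0, contDiffOn_const, contDiffOn_const, ?_, ?_, ?_, ?_⟩
    · intro x hx; rw [hIe] at hx; exact absurd hx (Set.notMem_empty x)
    · intro y _
      have : deriv (0 : ℝ → Fin m → ℝ) y = 0 := by
        simp [Pi.zero_def]
      rw [this, pform_zero_left]
    · intro x hx; rw [hIe] at hx; exact absurd hx (Set.notMem_empty x)
    · intro x hx; rw [hIe] at hx; exact absurd hx (Set.notMem_empty x)
  rcases Set.eq_empty_or_nonempty J with hJe | ⟨y₀, hy₀⟩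
  · refine ⟨0, 0, contDiffOn_const, contDiffOn_const, ?_, ?_, ?_, ?_⟩
    · intro x _
      have : deriv (0 : ℝ → Fin m → ℝ) x = 0 := by
        simp [Pi.zero_def]
      rw [this, pform_zero_left]
    · intro y hy; rw [hJe] at hy; exact absurd hy (Set.notMem_empty y)
    · intro x _ y hy; rw [hJe] at hy; exact absurd hy (Set.notMem_empty y)
    · intro x _ y hy; rw [hJe] at hy; exact absurd hy (Set.notMem_empty y)
  have hIconv : Convex ℝ I := convex_iff_ordConnected.2 hIc
  have hJconv : Convex ℝ J := convex_iff_ordConnected.2 hJc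
  -- Step 1: the mixed partial vanishes on I × J
  have hK0 : ∀ x ∈ I, ∀ y ∈ J, pd1 (pd2 L) x y = 0 := by
    intro x hx y hy
    set K := pd1 (pd2 L) x y with hKdef
    -- ⟨K, L_y⟩ = 0 from differentiating h2 in x
    have hKb : pform s m K (pd2 L x y) = 0 := by
      have hD := pd12_hasDerivAt' hIo hJo hL hx hy
      have hE := pd2_hasDerivAt' hIo hJo hL hx hy  -- not needed
      have hprod := hasDerivAt_pform (s := s) hD hD
      have hzero : HasDerivAt (fun t => pform s m (pd2 L t y) (pd2 L t y)) 0 x := by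
        refine (hasDerivAt_const x (0 : ℝ)).congr_of_eventuallyEq ?_
        filter_upwards [hIo.mem_nhds hx] with t ht
        exact h2 t ht y hy
      have huniq := hprod.unique hzero
      have : pform s m K (pd2 L x y) + pform s m K (pd2 L x y) = 0 := by
        rw [pform_comm s m (pd2 L x y) K] at huniq
        linarith [huniq]
      linarith [this]
    -- ⟨K, L_x⟩ = 0 from differentiating h1 in y (using Schwarz)
    have hKa : pform s m K (pd1 L x y) = 0 := by
      have hD := pd21_hasDerivAt' hIo hJo hL hx hy
      have hprod := hasDerivAt_pform (s := s) hD hD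
      have hzero : HasDerivAt (fun t => pform s m (pd1 L x t) (pd1 L x t)) 0 y := by
        refine (hasDerivAt_const y (0 : ℝ)).congr_of_eventuallyEq ?_
        filter_upwards [hJo.mem_nhds hy] with t ht
        exact h1 x hx t ht
      have huniq := hprod.unique hzero
      have : pform s m K (pd1 L x y) + pform s m K (pd1 L x y) = 0 := by
        rw [pform_comm s m (pd1 L x y) K] at huniq
        linarith [huniq]
      linarith [this]
    -- minimality: K = p • L_x + q • L_y
    obtain ⟨p, q, hpq⟩ := Submodule.mem_span_pair.1 (hmin x hx y hy)
    have hca : pform s m (pd1 L x y) (pd1 L x y) = 0 := h1 x hx y hy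
    have hcb : pform s m (pd2 L x y) (pd2 L x y) = 0 := h2 x hx y hy
    have hab : pform s m (pd1 L x y) (pd2 L x y) = c := h3 x hx y hy
    have hba : pform s m (pd2 L x y) (pd1 L x y) = c := by
      rw [pform_comm]; exact hab
    have hp : p = 0 := by
      have := hKb
      rw [hKdef, ← hpq, pform_combo_left, hab, hcb] at this
      have hpc : p * c = 0 := by linarith
      rcases mul_eq_zero.1 hpc with h | h
      · exact h
      · exact absurd h hc
    have hq : q = 0 := by
      have := hKa
      rw [hKdef, ← hpq, pform_combo_left, hca, hba] at this
      have hqc : q * c = 0 := by linarith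
      rcases mul_eq_zero.1 hqc with h | h
      · exact h
      · exact absurd h hc
    rw [hKdef, ← hpq, hp, hq]
    simp
  -- Step 2: pd2 L is independent of x, pd1 L is independent of y
  have hpd2const : ∀ x ∈ I, ∀ y ∈ J, pd2 L x y = pd2 L x₀ y := by
    intro x hx y hy
    apply const_of_hasDerivAt_zero hIconv hIo (f := fun t => pd2 L t y) _ hx hx₀
    intro t ht
    have h := pd12_hasDerivAt' hIo hJo hL ht hy
    rw [hK0 t ht y hy] at h
    exact h
  have hpd1const : ∀ x ∈ I, ∀ y ∈ J, pd1 L x y = pd1 L x y₀ := by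
    intro x hx y hy
    apply const_of_hasDerivAt_zero hJconv hJo (f := fun t => pd1 L x t) _ hy hy₀
    intro t ht
    have h := pd21_hasDerivAt' hIo hJo hL hx ht
    rw [hK0 x hx t ht] at h
    exact h
  -- Step 3: L x y - L x₀ y is independent of y
  have hsplit : ∀ x ∈ I, ∀ y ∈ J, L x y - L x₀ y = L x y₀ - L x₀ y₀ := by
    intro x hx y hy
    apply const_of_hasDerivAt_zero hJconv hJo (f := fun t => L x t - L x₀ t) _ hy hy₀
    intro t ht
    have h := (pd2_hasDerivAt' hIo hJo hL hx ht).fun_sub (pd2_hasDerivAt' hIo hJo hL hx₀ ht)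
    rw [hpd2const x hx t ht] at h
    simpa using h
  refine ⟨fun x => L x y₀, fun y => L x₀ y - L x₀ y₀, ?_, ?_, ?_, ?_, ?_, ?_⟩
  · exact hL.comp ((contDiff_id.prodMk contDiff_const).contDiffOn)
      (fun x hx => Set.mk_mem_prod hx hy₀)
  · exact (hL.comp ((contDiff_const.prodMk contDiff_id).contDiffOn)
      (fun y hy => Set.mk_mem_prod hx₀ hy)).sub contDiffOn_const
  · intro x hx
    have : deriv (fun x => L x y₀) x = pd1 L x y₀ := rfl
    rw [this]
    exact h1 x hx y₀ hy₀
  · intro y hy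
    have : deriv (fun y => L x₀ y - L x₀ y₀) y = pd2 L x₀ y :=
      ((pd2_hasDerivAt' hIo hJo hL hx₀ hy).sub_const (L x₀ y₀)).deriv
    rw [this]
    exact h2 x₀ hx₀ y hy
  · intro x hx y hy
    have e1 : deriv (fun x => L x y₀) x = pd1 L x y₀ := rfl
    have e2 : deriv (fun y => L x₀ y - L x₀ y₀) y = pd2 L x₀ y :=
      ((pd2_hasDerivAt' hIo hJo hL hx₀ hy).sub_const (L x₀ y₀)).deriv
    rw [e1, e2, ← hpd1const x hx y hy, ← hpd2const x hx y hy]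
    exact h3 x hx y hy
  · intro x hx y hy
    have h := hsplit x hx y hy
    linear_combination h
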